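/- arXiv:0902.4410 — 2 statements merged into one kernel-verified Lean document; each statement's English description precedes it below -/
import Mathlib

section
/- If V ~ Beta(b, b) with b > 0, then the conditional expectation ξ(b) = E(V | V ≥ 1/2) equals (Γ(2b)/Γ(b)^2) (1/4)^b { 1/b + Γ(1/2)Γ(b)/Γ(b+1/2) }. -/
open Real MeasureTheory intervalIntegral


private lemma beta_integrable {b : ℝ} (hb : 0 < b) {c d : ℝ}
    (hc : 0 ≤ c) (hc1 : c ≤ 1) (hd : 0 ≤ d) (hd1 : d ≤ 1) :
    IntervalIntegrable (fun v : ℝ => v ^ (b - 1) * (1 - v) ^ (b - 1)) volume c d := by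
  have hb1 : (-1 : ℝ) < b - 1 := by linarith
  have h1 : IntervalIntegrable (fun v : ℝ => v ^ (b - 1) * (1 - v) ^ (b - 1)) volume 0 (1/2) := by
    apply (intervalIntegral.intervalIntegrable_rpow' hb1).mul_continuousOn
    apply ContinuousOn.rpow_const (by fun_prop)
    intro x hx
    rw [Set.uIcc_of_le (by norm_num)] at hx
    left; simp only [Set.mem_Icc] at hx; intro h; linarith [hx.2]
  have h2 : IntervalIntegrable (fun v : ℝ => v ^ (b - 1) * (1 - v) ^ (b - 1)) volume (1/2) 1 := by
    have := ((intervalIntegral.intervalIntegrable_rpow' hb1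
      (a := 0) (b := 1/2)).comp_sub_left 1)
    norm_num at this
    apply this.symm.continuousOn_mul
    apply ContinuousOn.rpow_const (by fun_prop)
    intro x hx
    rw [Set.uIcc_of_le (by norm_num)] at hx
    left; simp only [Set.mem_Icc] at hx; intro h; linarith [hx.1]
  have h01 := h1.trans h2
  exact h01.mono_set ((Set.uIcc_subset_Icc ⟨hc, hc1⟩ ⟨hd, hd1⟩).trans (by rw [Set.uIcc_of_le (by norm_num : (0:ℝ) ≤ 1)]))


private lemma real_beta {b : ℝ} (hb : 0 < b) :
    ∫ v in (0:ℝ)..1, v ^ (b - 1) * (1 - v) ^ (b - 1) = Gamma b ^ 2 / Gamma (2 * b) := by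
  have key := Complex.Gamma_mul_Gamma_eq_betaIntegral
    (s := (b : ℂ)) (t := (b : ℂ)) (by simpa using hb) (by simpa using hb)
  have hbeta : Complex.betaIntegral (b : ℂ) (b : ℂ)
      = ((∫ v in (0:ℝ)..1, v ^ (b - 1) * (1 - v) ^ (b - 1) : ℝ) : ℂ) := by
    rw [Complex.betaIntegral, ← intervalIntegral.integral_ofReal]
    apply intervalIntegral.integral_congr
    intro x hx
    rw [Set.uIcc_of_le (by norm_num : (0:ℝ) ≤ 1)] at hx
    obtain ⟨hx0, hx1⟩ := hx
    push_cast
    rw [Complex.ofReal_cpow hx0, Complex.ofReal_cpow (by linarith)]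
    push_cast
    ring
  rw [hbeta, ← Complex.ofReal_add] at key
  have h2b : (b : ℂ) + b = ((2 * b : ℝ) : ℂ) := by push_cast; ring
  rw [Complex.Gamma_ofReal] at key
  rw [show b + b = 2*b by ring, Complex.Gamma_ofReal] at key
  have : (Gamma b * Gamma b : ℝ) = Gamma (2*b) * ∫ v in (0:ℝ)..1, v ^ (b - 1) * (1 - v) ^ (b - 1) := by
    exact_mod_cast key
  have hg : Gamma (2*b) ≠ 0 := (Gamma_pos_of_pos (by linarith)).ne'
  field_simp
  rw [sq]
  rw [mul_comm b 2]
  linarith [this]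

/-- **Conditional mean of a symmetric Beta.** For `V ~ Beta(b, b)`, by symmetry
`ξ(b) = E(V | V ≥ 1/2) = ∫_{1/2}^1 v ⋅ (Γ(2b)/Γ(b)²) ⋅ 2 v^{b-1} (1-v)^{b-1} dv`,
and this equals `(Γ(2b)/Γ(b)²) (1/4)^b {1/b + Γ(1/2)Γ(b)/Γ(b+1/2)}`. -/
theorem beta_conditional_mean (b : ℝ) (hb : 0 < b) :
    ∫ v in (1 / 2 : ℝ)..1,
        v * (Gamma (2 * b) / Gamma b ^ 2) * (2 * v ^ (b - 1) * (1 - v) ^ (b - 1)) =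
      Gamma (2 * b) / Gamma b ^ 2 * (1 / 4 : ℝ) ^ b *
        (1 / b + Gamma (1 / 2) * Gamma b / Gamma (b + 1 / 2)) := by
  set C := Gamma (2 * b) / Gamma b ^ 2 with hC
  set f : ℝ → ℝ := fun v => v ^ (b - 1) * (1 - v) ^ (b - 1) with hf
  set g : ℝ → ℝ := fun v => (2 * v - 1) * (v ^ (b - 1) * (1 - v) ^ (b - 1)) with hg
  have hfi : IntervalIntegrable f volume (1/2) 1 :=
    beta_integrable hb (by norm_num) (by norm_num) (by norm_num) (by norm_num)
  have hgi : IntervalIntegrable g volume (1/2) 1 := by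
    apply hfi.continuousOn_mul (by fun_prop)
  -- Step 1: rewrite integrand
  have step1 : (∫ v in (1/2:ℝ)..1,
      v * C * (2 * v ^ (b - 1) * (1 - v) ^ (b - 1)))
      = C * ((∫ v in (1/2:ℝ)..1, f v) + ∫ v in (1/2:ℝ)..1, g v) := by
    rw [← intervalIntegral.integral_add hfi hgi, ← intervalIntegral.integral_const_mul]
    apply intervalIntegral.integral_congr
    intro x _
    simp only [hf, hg]
    ring
  -- Step 2: symmetry integral of f
  have step2 : (∫ v in (1/2:ℝ)..1, f v) = Gamma b ^ 2 / Gamma (2 * b) / 2 := by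
    have hfe : ∀ x : ℝ, f (1 - x) = f x := by
      intro x; simp only [hf, sub_sub_cancel]; ring
    have hsym : (∫ v in (1/2:ℝ)..1, f v) = ∫ v in (0:ℝ)..(1/2), f v := by
      have h := intervalIntegral.integral_comp_sub_left f 1 (a := 1/2) (b := 1)
      rw [funext hfe] at h
      rw [h]
      norm_num
    have hadd := intervalIntegral.integral_add_adjacent_intervals
      (beta_integrable hb (le_refl 0) (by norm_num) (by norm_num) (by norm_num))
      hfi
    rw [real_beta hb] at hadd
    rw [hsym]
    linarith [hadd, hsym]
  -- Step 3: FTC for g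
  have step3 : (∫ v in (1/2:ℝ)..1, g v) = (1/4:ℝ) ^ b / b := by
    have hFTC := intervalIntegral.integral_eq_sub_of_hasDerivAt_of_le
      (f := fun v : ℝ => -(v * (1 - v)) ^ b / b) (f' := g)
      (by norm_num : (1/2:ℝ) ≤ 1)
      (by
        apply ContinuousOn.div_const
        apply ContinuousOn.neg
        exact (continuousOn_id.mul (by fun_prop)).rpow_const fun x _ => Or.inr hb.le)
      (by
        intro x hx
        obtain ⟨hx1, hx2⟩ := hx
        have hxpos : 0 < x := by linarith
        have h1x : 0 < 1 - x := by linarith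
        have hprod : 0 < x * (1 - x) := mul_pos hxpos h1x
        have h1 : HasDerivAt (fun v : ℝ => v * (1 - v)) (1 - 2 * x) x := by
          have := (hasDerivAt_id x).mul ((hasDerivAt_id x).const_sub 1)
          change HasDerivAt (fun v : ℝ => v * (1 - v)) (1 * (1 - x) + x * -1) x at this
          convert this using 1
          ring
        have h2 := h1.rpow_const (p := b) (Or.inl hprod.ne')
        have h3 := (h2.neg).div_const b
        change HasDerivAt (fun v : ℝ => -(v * (1 - v)) ^ b / b) (-((1 - 2 * x) * b * (x * (1 - x)) ^ (b - 1)) / b) x at h3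
        refine h3.congr_deriv ?_
        show _ = (2 * x - 1) * (x ^ (b - 1) * (1 - x) ^ (b - 1))
        rw [Real.mul_rpow hxpos.le h1x.le]
        field_simp
        ring)
      hgi
    rw [hFTC]
    norm_num [Real.zero_rpow hb.ne']
    ring
  rw [step1, step2, step3]
  -- Step 4: algebra with duplication formula
  have hΓb := Gamma_pos_of_pos hb
  have hΓ2b := Gamma_pos_of_pos (by linarith : (0:ℝ) < 2 * b)
  have hΓbh := Gamma_pos_of_pos (by linarith : (0:ℝ) < b + 1/2)
  have dup := Real.Gamma_mul_Gamma_add_half b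
  have hpi : (0:ℝ) < √π := sqrt_pos.mpr pi_pos
  have h14 : (1/4:ℝ) ^ b = (2:ℝ) ^ (1 - 2 * b) / 2 := by
    have h2 : (1/4:ℝ) = (2:ℝ) ^ (-2:ℝ) := by
      rw [show (-2:ℝ) = ((-2:ℤ):ℝ) by norm_num, Real.rpow_intCast]
      norm_num
    rw [h2, ← Real.rpow_mul (by norm_num), show (-2:ℝ) * b = (1 - 2*b) + (-1) by ring,
      Real.rpow_add (by norm_num), Real.rpow_neg_one]
    ring
  have hkey : Gamma b ^ 2 / Gamma (2 * b)
      = (2:ℝ) ^ (1 - 2 * b) * √π * Gamma b / Gamma (b + 1/2) := by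
    rw [div_eq_div_iff hΓ2b.ne' hΓbh.ne']
    linear_combination Gamma b * dup
  rw [Gamma_one_half_eq, h14, hkey, hC]
  generalize Gamma (b + 1/2) = G
  ring
end

section
/- For the multinomial substitute likelihood L_n(q) = n!/(N_1(q)! ⋯ N_k(q)!) · (1/k)^n with k = 4 and quantile vector (q_1, q_2, q_3), one has the pyramidal factorization L_n(q_1,q_2,q_3) = κ_n(q_2; 0, 1) κ_n(q_1; 0, q_2) κ_n(q_3; q_2, 1), where κ_n(q; a, b) = C(M_n(a,b), M_n(a,q)) (1/2)^{M_n(a,b)} and M_n(a,b) counts the data points in (a,b]. -/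
open Set

lemma count_add (n : ℕ) (x : Fin n → ℝ) {a b c : ℝ} (hab : a ≤ b) (hbc : b ≤ c) :
    Nat.card {i : Fin n // x i ∈ Ioc a b} + Nat.card {i : Fin n // x i ∈ Ioc b c}
      = Nat.card {i : Fin n // x i ∈ Ioc a c} := by
  simp only [Nat.card_eq_fintype_card, Fintype.card_subtype]
  rw [← Finset.card_union_of_disjoint, ← Finset.filter_or]
  · apply Finset.card_bij (fun i _ => i) <;> intro i hi
    · simp only [Finset.mem_filter, Finset.mem_univ, true_and] at hi ⊢
      rcases hi with ⟨h1, h2⟩ | ⟨h1, h2⟩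
      · exact ⟨h1, h2.trans hbc⟩
      · exact ⟨hab.trans_lt h1, h2⟩
    · exact fun j _ h => h
    · simp only [Finset.mem_filter, Finset.mem_univ, true_and] at hi
      refine ⟨i, ?_, rfl⟩
      simp only [Finset.mem_filter, Finset.mem_univ, true_and]
      rcases le_or_gt (x i) b with h | h
      · exact Or.inl ⟨hi.1, h⟩
      · exact Or.inr ⟨h, hi.2⟩
  · rw [Finset.disjoint_filter]
    rintro i _ ⟨_, h2⟩ ⟨h3, _⟩
    exact absurd h2 (not_le.mpr h3)

/-- **Pyramidal factorization of the multinomial substitute likelihood** for `k = 4`: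
`L_n(q₁,q₂,q₃) = n!/(N₁!N₂!N₃!N₄!) (1/4)^n = κ_n(q₂;0,1) κ_n(q₁;0,q₂) κ_n(q₃;q₂,1)`,
where `κ_n(q;a,b) = C(M(a,b), M(a,q)) (1/2)^{M(a,b)}` and `M(a,b)` counts data in `(a,b]`. -/
theorem substitute_likelihood_factorization
    (n : ℕ) (x : Fin n → ℝ) (hx : ∀ i, x i ∈ Ioc (0 : ℝ) 1)
    (q₁ q₂ q₃ : ℝ) (h01 : 0 < q₁) (h12 : q₁ < q₂) (h23 : q₂ < q₃) (h31 : q₃ < 1)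
    (M : ℝ → ℝ → ℕ) (hM : ∀ a b, M a b = Nat.card {i : Fin n // x i ∈ Ioc a b})
    (κ : ℝ → ℝ → ℝ → ℝ)
    (hκ : ∀ q a b, κ q a b = (Nat.choose (M a b) (M a q) : ℝ) * (1 / 2 : ℝ) ^ M a b) :
    (n.factorial : ℝ) /
        ((M 0 q₁).factorial * (M q₁ q₂).factorial * (M q₂ q₃).factorial * (M q₃ 1).factorial)
        * (1 / 4 : ℝ) ^ n =
      κ q₂ 0 1 * κ q₁ 0 q₂ * κ q₃ q₂ 1 := by
  have h1 : M 0 q₁ + M q₁ q₂ = M 0 q₂ := by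
    rw [hM, hM, hM]; exact count_add n x h01.le h12.le
  have h2 : M q₂ q₃ + M q₃ 1 = M q₂ 1 := by
    rw [hM, hM, hM]; exact count_add n x h23.le h31.le
  have h3 : M 0 q₂ + M q₂ 1 = M 0 1 := by
    rw [hM, hM, hM]; exact count_add n x (h01.trans h12).le ((h23.trans h31).le)
  have hn : M 0 1 = n := by
    rw [hM, Nat.card_eq_fintype_card, Fintype.card_subtype,
      Finset.filter_true_of_mem (fun i _ => hx i), Finset.card_univ, Fintype.card_fin]
  rw [hκ, hκ, hκ, hn, ← h1, ← h2]
  set a := M 0 q₁ with ha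
  set b := M q₁ q₂ with hb
  set c := M q₂ q₃ with hc
  set d := M q₃ 1 with hd
  have hne : n = a + b + (c + d) := by omega
  rw [hne]
  have E1 : ((a+b).choose a : ℝ) * a.factorial * b.factorial = (a+b).factorial := by
    have h := Nat.add_choose_mul_factorial_mul_factorial b a
    rw [add_comm b a] at h
    exact_mod_cast (show (a+b).choose a * a.factorial * b.factorial = (a+b).factorial by
      rw [← h]; ring)
  have E2 : ((c+d).choose c : ℝ) * c.factorial * d.factorial = (c+d).factorial := by
    have h := Nat.add_choose_mul_factorial_mul_factorial d c
    rw [add_comm d c] at h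
    exact_mod_cast (show (c+d).choose c * c.factorial * d.factorial = (c+d).factorial by
      rw [← h]; ring)
  have E3 : ((a+b+(c+d)).choose (a+b) : ℝ) * (a+b).factorial * (c+d).factorial
      = (a+b+(c+d)).factorial := by
    have h := Nat.add_choose_mul_factorial_mul_factorial (c+d) (a+b)
    rw [add_comm (c+d) (a+b)] at h
    exact_mod_cast (show (a+b+(c+d)).choose (a+b) * (a+b).factorial * (c+d).factorial
      = (a+b+(c+d)).factorial by rw [← h]; ring)
  have hpow : ((1:ℝ)/4) ^ (a+b+(c+d))
      = ((1:ℝ)/2)^(a+b+(c+d)) * (((1:ℝ)/2)^(a+b) * ((1:ℝ)/2)^(c+d)) := by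
    rw [← pow_add, ← mul_pow]
    norm_num
  have f1 : (0:ℝ) < (a.factorial : ℝ) := by positivity
  have f2 : (0:ℝ) < (b.factorial : ℝ) := by positivity
  have f3 : (0:ℝ) < (c.factorial : ℝ) := by positivity
  have f4 : (0:ℝ) < (d.factorial : ℝ) := by positivity
  rw [hpow, div_mul_eq_mul_div, div_eq_iff (by positivity)]
  linear_combination
    (-(((1:ℝ)/2)^(a+b+(c+d)) * ((1/2:ℝ)^(a+b) * (1/2:ℝ)^(c+d)))
        * (((a+b+(c+d)).choose (a+b) : ℝ)) * (((c+d).choose c : ℝ))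
        * (c.factorial : ℝ) * (d.factorial : ℝ)) * E1
    + (-(((1:ℝ)/2)^(a+b+(c+d)) * ((1/2:ℝ)^(a+b) * (1/2:ℝ)^(c+d)))
        * (((a+b+(c+d)).choose (a+b) : ℝ)) * ((a+b).factorial : ℝ)) * E2
    + (-(((1:ℝ)/2)^(a+b+(c+d)) * ((1/2:ℝ)^(a+b) * (1/2:ℝ)^(c+d)))) * E3
end
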